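/- Non-signaling correlated resources shared between the two decoders do not increase the classical capacity region of a quantum broadcast channel: if Receiver 1 and Receiver 2 may base their decoding on the outcomes β₁, β₂ of any bipartite non-signaling correlation p(b₁,b₂|x₁,x₂) (satisfying Σ_{b₂} p(b₁,b₂|x₁,x₂) = p(b₁|x₁) and Σ_{b₁} p(b₁,b₂|x₁,x₂) = p(b₂|x₂)), then the capacity region for classical messages with degraded message sets over N_{A→B₁B₂} equals the capacity region without such resources. -/

import Mathlib

/-!
The non-signaling resource shared by the decoders can be removed at the cost of doubling the
error. Each receiver replaces its outcome-dependent POVM `{D_b}` by the average `∑_b w(b) D_b`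
over the marginal `w` of its own outcome. For a fixed message pair let `A_{b₁}`, `B_{b₂}` be
the correct-decoding POVM elements and `A'`, `B'` their averages. Since
`(1 - A') ⊗ (1 - B') ≥ 0`, the new error `1 - Tr[(A' ⊗ B') σ]` is at most
`(1 - Tr[(A' ⊗ 1) σ]) + (1 - Tr[(1 ⊗ B') σ])`, and since `A ⊗ B ≤ A ⊗ 1` and
`A ⊗ B ≤ 1 ⊗ B`, each of these two terms is at most the original error
`1 - ∑ p(b₁,b₂) Tr[(A_{b₁} ⊗ B_{b₂}) σ]`.
-/

open scoped BigOperators ComplexOrder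
open Matrix Kronecker Filter

noncomputable section

namespace QBC

/-- A density operator: positive semidefinite with unit trace. -/
def IsDensity {α : Type*} [Fintype α] (ρ : Matrix α α ℂ) : Prop :=
  ρ.PosSemidef ∧ ρ.trace = 1

/-- The von Neumann entropy (in bits) of a matrix, via its eigenvalues. -/
def vnEntropy {α : Type*} [Fintype α] [DecidableEq α] (ρ : Matrix α α ℂ) : ℝ :=
  if h : ρ.IsHermitian then -∑ i, h.eigenvalues i * Real.logb 2 (h.eigenvalues i) else 0

/-- Partial trace over the second tensor factor. -/
def ptr₂ {α β : Type*} [Fintype β] (ρ : Matrix (α × β) (α × β) ℂ) : Matrix α α ℂ :=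
  Matrix.of fun i j => ∑ k : β, ρ (i, k) (j, k)

/-- Partial trace over the first tensor factor. -/
def ptr₁ {α β : Type*} [Fintype α] (ρ : Matrix (α × β) (α × β) ℂ) : Matrix β β ℂ :=
  Matrix.of fun i j => ∑ k : α, ρ (k, i) (k, j)

/-- The rank-one density operator associated with a (unit) vector. -/
def pureState {α : Type*} (ψ : α → ℂ) : Matrix α α ℂ :=
  Matrix.of fun i j => ψ i * star (ψ j)

/-- The Choi matrix of a linear map on matrices. -/
def choi {α β : Type*} [Fintype α] [DecidableEq α]
    (Φ : Matrix α α ℂ →ₗ[ℂ] Matrix β β ℂ) : Matrix (α × β) (α × β) ℂ :=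
  Matrix.of fun p q => Φ (Matrix.single p.1 q.1 1) p.2 q.2

/-- A quantum channel: completely positive (positive semidefinite Choi matrix, by Choi's
theorem) and trace preserving. -/
def IsCPTP {α β : Type*} [Fintype α] [DecidableEq α] [Fintype β]
    (Φ : Matrix α α ℂ →ₗ[ℂ] Matrix β β ℂ) : Prop :=
  (choi Φ).PosSemidef ∧ ∀ ρ, (Φ ρ).trace = ρ.trace

/-- The tensor product of two linear maps on matrices. -/
def lmTensor {α β γ δ : Type*} [Fintype α] [DecidableEq α] [Fintype γ] [DecidableEq γ]
    (Φ : Matrix α α ℂ →ₗ[ℂ] Matrix β β ℂ) (Ψ : Matrix γ γ ℂ →ₗ[ℂ] Matrix δ δ ℂ) :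
    Matrix (α × γ) (α × γ) ℂ →ₗ[ℂ] Matrix (β × δ) (β × δ) ℂ where
  toFun ρ := Matrix.of fun i j => ∑ p : α, ∑ q : α, ∑ r : γ, ∑ s : γ,
    ρ (p, r) (q, s) * (Φ (Matrix.single p q 1) i.1 j.1 *
      Ψ (Matrix.single r s 1) i.2 j.2)
  map_add' ρ σ := by
    ext i j
    simp [Matrix.add_apply, add_mul, Finset.sum_add_distrib]
  map_smul' c ρ := by
    ext i j
    simp [Matrix.smul_apply, smul_eq_mul, Finset.mul_sum, mul_assoc]

/-- The `n`-fold tensor power of a linear map on matrices. -/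
def tensorPow {α β : Type*} [Fintype α] [DecidableEq α] [Fintype β]
    (Φ : Matrix α α ℂ →ₗ[ℂ] Matrix β β ℂ) (n : ℕ) :
    Matrix (Fin n → α) (Fin n → α) ℂ →ₗ[ℂ] Matrix (Fin n → β) (Fin n → β) ℂ where
  toFun ρ := Matrix.of fun i j => ∑ p : Fin n → α, ∑ q : Fin n → α,
    ρ p q * ∏ t, Φ (Matrix.single (p t) (q t) 1) (i t) (j t)
  map_add' ρ σ := by
    ext i j
    simp [Matrix.add_apply, add_mul, Finset.sum_add_distrib]
  map_smul' c ρ := by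
    ext i j
    simp [Matrix.smul_apply, smul_eq_mul, Finset.mul_sum, mul_assoc]

/-- `n` uses of a broadcast channel, with the output arranged as `B₁ⁿ × B₂ⁿ`. -/
def prodChannel {α β₁ β₂ : Type*} [Fintype α] [DecidableEq α] [Fintype β₁] [Fintype β₂]
    (N : Matrix α α ℂ →ₗ[ℂ] Matrix (β₁ × β₂) (β₁ × β₂) ℂ) (n : ℕ) :
    Matrix (Fin n → α) (Fin n → α) ℂ →ₗ[ℂ]
      Matrix ((Fin n → β₁) × (Fin n → β₂)) ((Fin n → β₁) × (Fin n → β₂)) ℂ :=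
  (Matrix.reindexLinearEquiv ℂ ℂ (Equiv.arrowProdEquivProdArrow (Fin n) (fun _ => β₁) (fun _ => β₂))
    (Equiv.arrowProdEquivProdArrow (Fin n) (fun _ => β₁) (fun _ => β₂))).toLinearMap ∘ₗ tensorPow N n

section cq

variable {X₀ X₁ B₁ B₂ : Type*} [Fintype X₀] [DecidableEq X₀] [Fintype X₁] [DecidableEq X₁]
  [Fintype B₁] [DecidableEq B₁] [Fintype B₂] [DecidableEq B₂]

/-- The classical–quantum state `Σ p(x₀,x₁) |x₀⟩⟨x₀| ⊗ |x₁⟩⟨x₁| ⊗ ρ^{x₀,x₁}`. -/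
def cqState (p : X₀ → X₁ → ℝ) (ρ : X₀ → X₁ → Matrix (B₁ × B₂) (B₁ × B₂) ℂ) :
    Matrix ((X₀ × X₁) × (B₁ × B₂)) ((X₀ × X₁) × (B₁ × B₂)) ℂ :=
  Matrix.of fun a b => if a.1 = b.1 then (p a.1.1 a.1.2 : ℂ) * ρ a.1.1 a.1.2 a.2 b.2 else 0

variable (ρ : Matrix ((X₀ × X₁) × (B₁ × B₂)) ((X₀ × X₁) × (B₁ × B₂)) ℂ)

def redX₀ : Matrix X₀ X₀ ℂ := ptr₂ (ptr₂ ρ)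

def redX₀X₁ : Matrix (X₀ × X₁) (X₀ × X₁) ℂ := ptr₂ ρ

def redB₁ : Matrix B₁ B₁ ℂ := ptr₂ (ptr₁ ρ)

def redB₂ : Matrix B₂ B₂ ℂ := ptr₁ (ptr₁ ρ)

def redX₀B₂ : Matrix (X₀ × B₂) (X₀ × B₂) ℂ :=
  Matrix.of fun i j => ∑ u : X₁, ∑ k : B₁, ρ ((i.1, u), (k, i.2)) ((j.1, u), (k, j.2))

def redX₀B₁ : Matrix (X₀ × B₁) (X₀ × B₁) ℂ :=
  Matrix.of fun i j => ∑ u : X₁, ∑ l : B₂, ρ ((i.1, u), (i.2, l)) ((j.1, u), (j.2, l))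

def redX₁B₂ : Matrix (X₁ × B₂) (X₁ × B₂) ℂ :=
  Matrix.of fun i j => ∑ x : X₀, ∑ k : B₁, ρ ((x, i.1), (k, i.2)) ((x, j.1), (k, j.2))

def redX₀X₁B₁ : Matrix ((X₀ × X₁) × B₁) ((X₀ × X₁) × B₁) ℂ :=
  Matrix.of fun i j => ∑ l : B₂, ρ (i.1, (i.2, l)) (j.1, (j.2, l))

/-- `I(X₀;B₂)_ρ = H(X₀) + H(B₂) − H(X₀B₂)`. -/
def IX₀B₂ : ℝ := vnEntropy (redX₀ ρ) + vnEntropy (redB₂ ρ) - vnEntropy (redX₀B₂ ρ)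

/-- `I(X₁;B₁|X₀)_ρ = H(X₀X₁) + H(X₀B₁) − H(X₀) − H(X₀X₁B₁)`. -/
def IX₁B₁X₀ : ℝ :=
  vnEntropy (redX₀X₁ ρ) + vnEntropy (redX₀B₁ ρ) - vnEntropy (redX₀ ρ) -
    vnEntropy (redX₀X₁B₁ ρ)

/-- `I(X₀X₁;B₁)_ρ = H(X₀X₁) + H(B₁) − H(X₀X₁B₁)`. -/
def IX₀X₁B₁ : ℝ := vnEntropy (redX₀X₁ ρ) + vnEntropy (redB₁ ρ) - vnEntropy (redX₀X₁B₁ ρ)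

end cq

/-- The single-letter rate region `R_Cl(N)` with conferencing capacity `C₁₂`. -/
def RCl {ι β₁ β₂ : Type*} [Fintype ι] [DecidableEq ι] [Fintype β₁] [DecidableEq β₁]
    [Fintype β₂] [DecidableEq β₂]
    (N : Matrix ι ι ℂ →ₗ[ℂ] Matrix (β₁ × β₂) (β₁ × β₂) ℂ) (C₁₂ : ℝ) : Set (ℝ × ℝ) :=
  {r | ∃ (a b : ℕ) (p : Fin a → Fin b → ℝ) (θ : Fin a → Fin b → Matrix ι ι ℂ),
    (∀ x₀ x₁, 0 ≤ p x₀ x₁) ∧ (∑ x₀, ∑ x₁, p x₀ x₁) = 1 ∧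
    (∀ x₀ x₁, IsDensity (θ x₀ x₁)) ∧
    r.1 ≤ IX₀B₂ (cqState p fun x₀ x₁ => N (θ x₀ x₁)) + C₁₂ ∧
    r.2 ≤ IX₁B₁X₀ (cqState p fun x₀ x₁ => N (θ x₀ x₁)) ∧
    r.1 + r.2 ≤ IX₀X₁B₁ (cqState p fun x₀ x₁ => N (θ x₀ x₁))}

/-- A classical code with degraded message sets and conferencing:
`M₀` common messages, `M₁` private messages for User 1, `K` conference messages. -/
structure CCode (ι β₁ β₂ : Type*) [Fintype ι] [DecidableEq ι] [Fintype β₁] [DecidableEq β₁]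
    [Fintype β₂] [DecidableEq β₂] (n M₀ M₁ K : ℕ) where
  enc : Fin M₀ → Fin M₁ → Matrix (Fin n → ι) (Fin n → ι) ℂ
  enc_density : ∀ m₀ m₁, IsDensity (enc m₀ m₁)
  dec1 : Fin M₀ → Fin M₁ → Fin K → Matrix (Fin n → β₁) (Fin n → β₁) ℂ
  dec1_pos : ∀ m₀ m₁ g, (dec1 m₀ m₁ g).PosSemidef
  dec1_sum : (∑ m₀, ∑ m₁, ∑ g, dec1 m₀ m₁ g) = 1
  dec2 : Fin K → Fin M₀ → Matrix (Fin n → β₂) (Fin n → β₂) ℂ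
  dec2_pos : ∀ g m₀, (dec2 g m₀).PosSemidef
  dec2_sum : ∀ g, (∑ m₀, dec2 g m₀) = 1

/-- The probability of error of a classical conferencing code, given the message pair. -/
def CCode.err {ι β₁ β₂ : Type*} [Fintype ι] [DecidableEq ι] [Fintype β₁] [DecidableEq β₁]
    [Fintype β₂] [DecidableEq β₂] {n M₀ M₁ K : ℕ}
    (N : Matrix ι ι ℂ →ₗ[ℂ] Matrix (β₁ × β₂) (β₁ × β₂) ℂ)
    (c : CCode ι β₁ β₂ n M₀ M₁ K) (m₀ : Fin M₀) (m₁ : Fin M₁) : ℝ :=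
  1 - (∑ g, ((c.dec1 m₀ m₁ g ⊗ₖ c.dec2 g m₀) * prodChannel N n (c.enc m₀ m₁)).trace).re

/-- Achievability of a classical rate pair with conferencing. -/
def achievable {ι β₁ β₂ : Type*} [Fintype ι] [DecidableEq ι] [Fintype β₁] [DecidableEq β₁]
    [Fintype β₂] [DecidableEq β₂]
    (N : Matrix ι ι ℂ →ₗ[ℂ] Matrix (β₁ × β₂) (β₁ × β₂) ℂ) (C₁₂ : ℝ) (r : ℝ × ℝ) : Prop :=
  ∀ ε : ℝ, 0 < ε → ∃ n₀ : ℕ, ∀ n, n₀ ≤ n →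
    ∃ (M₀ M₁ K : ℕ) (c : CCode ι β₁ β₂ n M₀ M₁ K),
      (2 : ℝ) ^ ((n : ℝ) * r.1) ≤ M₀ ∧ (2 : ℝ) ^ ((n : ℝ) * r.2) ≤ M₁ ∧
      (K : ℝ) ≤ (2 : ℝ) ^ ((n : ℝ) * C₁₂) ∧ ∀ m₀ m₁, CCode.err N c m₀ m₁ ≤ ε

/-- The classical capacity region with conferencing. -/
def capacityRegion {ι β₁ β₂ : Type*} [Fintype ι] [DecidableEq ι] [Fintype β₁] [DecidableEq β₁]
    [Fintype β₂] [DecidableEq β₂]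
    (N : Matrix ι ι ℂ →ₗ[ℂ] Matrix (β₁ × β₂) (β₁ × β₂) ℂ) (C₁₂ : ℝ) : Set (ℝ × ℝ) :=
  {r | achievable N C₁₂ r}


/-- The trace norm `‖A‖₁ = Tr √(AᴴA)`, via the eigenvalues of `AᴴA`. -/
def traceNorm {α : Type*} [Fintype α] [DecidableEq α] (A : Matrix α α ℂ) : ℝ :=
  ∑ i, Real.sqrt ((Matrix.posSemidef_conjTranspose_mul_self A).1.eigenvalues i)

/-- Coherent information `I(A⟩B)_ρ = H(B) − H(AB)` of a bipartite state on `α × β`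
(the first factor is `A`, the second is `B`). -/
def cohInfo {α β : Type*} [Fintype α] [DecidableEq α] [Fintype β] [DecidableEq β]
    (ρ : Matrix (α × β) (α × β) ℂ) : ℝ :=
  vnEntropy (ptr₁ ρ) - vnEntropy ρ

/-- Quantum mutual information `I(A;B)_ρ = H(A) + H(B) − H(AB)`. -/
def mutualInfo {α β : Type*} [Fintype α] [DecidableEq α] [Fintype β] [DecidableEq β]
    (ρ : Matrix (α × β) (α × β) ℂ) : ℝ :=
  vnEntropy (ptr₂ ρ) + vnEntropy (ptr₁ ρ) - vnEntropy ρ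

/-- A quantum code with quantum conferencing: message systems of dimensions `K₁`, `K₂`
and a conference register of dimension `KG` sent noiselessly from Receiver 1 to Receiver 2. -/
structure QCode (ι β₁ β₂ : Type*) [Fintype ι] [DecidableEq ι] [Fintype β₁] [DecidableEq β₁]
    [Fintype β₂] [DecidableEq β₂] (n K₁ K₂ KG : ℕ) where
  F : Matrix (Fin K₁ × Fin K₂) (Fin K₁ × Fin K₂) ℂ →ₗ[ℂ] Matrix (Fin n → ι) (Fin n → ι) ℂ
  F_cptp : IsCPTP F
  D1 : Matrix (Fin n → β₁) (Fin n → β₁) ℂ →ₗ[ℂ] Matrix (Fin K₁ × Fin KG) (Fin K₁ × Fin KG) ℂ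
  D1_cptp : IsCPTP D1
  D2 : Matrix (Fin KG × (Fin n → β₂)) (Fin KG × (Fin n → β₂)) ℂ →ₗ[ℂ] Matrix (Fin K₂) (Fin K₂) ℂ
  D2_cptp : IsCPTP D2

/-- The state recovered by the decoders: apply the encoder, `n` uses of the channel,
Receiver 1's decoder on `B₁ⁿ`, the noiseless conference link, and Receiver 2's decoder. -/
def QCode.output {ι β₁ β₂ : Type*} [Fintype ι] [DecidableEq ι] [Fintype β₁] [DecidableEq β₁]
    [Fintype β₂] [DecidableEq β₂] {n K₁ K₂ KG : ℕ}
    (N : Matrix ι ι ℂ →ₗ[ℂ] Matrix (β₁ × β₂) (β₁ × β₂) ℂ)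
    (c : QCode ι β₁ β₂ n K₁ K₂ KG)
    (ρ : Matrix (Fin K₁ × Fin K₂) (Fin K₁ × Fin K₂) ℂ) :
    Matrix (Fin K₁ × Fin K₂) (Fin K₁ × Fin K₂) ℂ :=
  lmTensor (LinearMap.id : Matrix (Fin K₁) (Fin K₁) ℂ →ₗ[ℂ] Matrix (Fin K₁) (Fin K₁) ℂ) c.D2
    (Matrix.reindex (Equiv.prodAssoc (Fin K₁) (Fin KG) (Fin n → β₂))
      (Equiv.prodAssoc (Fin K₁) (Fin KG) (Fin n → β₂))
      (lmTensor c.D1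
        (LinearMap.id : Matrix (Fin n → β₂) (Fin n → β₂) ℂ →ₗ[ℂ]
          Matrix (Fin n → β₂) (Fin n → β₂) ℂ)
        (prodChannel N n (c.F ρ))))

/-- The code recovers every message state within trace distance `ε`. -/
def QCode.good {ι β₁ β₂ : Type*} [Fintype ι] [DecidableEq ι] [Fintype β₁] [DecidableEq β₁]
    [Fintype β₂] [DecidableEq β₂] {n K₁ K₂ KG : ℕ}
    (N : Matrix ι ι ℂ →ₗ[ℂ] Matrix (β₁ × β₂) (β₁ × β₂) ℂ)
    (c : QCode ι β₁ β₂ n K₁ K₂ KG) (ε : ℝ) : Prop :=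
  ∀ ρ, IsDensity ρ → (1 / 2) * traceNorm (ρ - QCode.output N c ρ) ≤ ε

/-- Achievability of a quantum rate pair with quantum conferencing of capacity `CQ`. -/
def QAchievable {ι β₁ β₂ : Type*} [Fintype ι] [DecidableEq ι] [Fintype β₁] [DecidableEq β₁]
    [Fintype β₂] [DecidableEq β₂]
    (N : Matrix ι ι ℂ →ₗ[ℂ] Matrix (β₁ × β₂) (β₁ × β₂) ℂ) (CQ : ℝ) (q : ℝ × ℝ) : Prop :=
  ∀ ε : ℝ, 0 < ε → ∃ n₀ : ℕ, ∀ n, n₀ ≤ n →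
    ∃ (K₁ K₂ KG : ℕ) (c : QCode ι β₁ β₂ n K₁ K₂ KG),
      (2 : ℝ) ^ ((n : ℝ) * q.1) ≤ K₁ ∧ (2 : ℝ) ^ ((n : ℝ) * q.2) ≤ K₂ ∧
      (KG : ℝ) ≤ (2 : ℝ) ^ ((n : ℝ) * CQ) ∧ QCode.good N c ε

/-- The quantum capacity of the primitive relay channel: the supremum of rates `Q₂`
such that `(0, Q₂)` is achievable. -/
def relayCapacity {ι β₁ β₂ : Type*} [Fintype ι] [DecidableEq ι] [Fintype β₁] [DecidableEq β₁]
    [Fintype β₂] [DecidableEq β₂]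
    (N : Matrix ι ι ℂ →ₗ[ℂ] Matrix (β₁ × β₂) (β₁ × β₂) ℂ) (CQ : ℝ) : ℝ :=
  sSup {q : ℝ | QAchievable N CQ (0, q)}

/-- The entanglement of formation of a bipartite state on `α × β`,
with respect to the bipartition `α | β`. -/
def EF {α β : Type*} [Fintype α] [DecidableEq α] [Fintype β] [DecidableEq β]
    (ρ : Matrix (α × β) (α × β) ℂ) : ℝ :=
  sInf {x : ℝ | ∃ (m : ℕ) (p : Fin m → ℝ) (ψ : Fin m → α × β → ℂ),
    (∀ i, 0 ≤ p i) ∧ (∑ i, p i) = 1 ∧ (∀ i, (∑ v, ‖ψ i v‖ ^ 2) = 1) ∧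
    ρ = ∑ i, (p i : ℂ) • pureState (ψ i) ∧
    x = ∑ i, p i * vnEntropy (ptr₂ (pureState (ψ i)))}


/-- The identity channel. -/
def idChan (α : Type*) : Matrix α α ℂ →ₗ[ℂ] Matrix α α ℂ := LinearMap.id

/-- A classical code with degraded message sets where the decoders may base their
decoding on the outcomes of a bipartite non-signaling correlation
`p(b₁,b₂|x₁,x₂)` (with chosen inputs `inp1`, `inp2`). -/
structure NSCode (ι β₁ β₂ : Type*) [Fintype ι] [DecidableEq ι] [Fintype β₁] [DecidableEq β₁]
    [Fintype β₂] [DecidableEq β₂] (n M₀ M₁ n₁ n₂ c₁ c₂ : ℕ) where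
  enc : Fin M₀ → Fin M₁ → Matrix (Fin n → ι) (Fin n → ι) ℂ
  enc_density : ∀ m₀ m₁, IsDensity (enc m₀ m₁)
  p : Fin c₁ → Fin c₂ → Fin n₁ → Fin n₂ → ℝ
  p_nonneg : ∀ x₁ x₂ b₁ b₂, 0 ≤ p x₁ x₂ b₁ b₂
  p_sum : ∀ x₁ x₂, (∑ b₁, ∑ b₂, p x₁ x₂ b₁ b₂) = 1
  p_ns1 : ∀ x₁ x₂ x₂' b₁, (∑ b₂, p x₁ x₂ b₁ b₂) = ∑ b₂, p x₁ x₂' b₁ b₂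
  p_ns2 : ∀ x₁ x₁' x₂ b₂, (∑ b₁, p x₁ x₂ b₁ b₂) = ∑ b₁, p x₁' x₂ b₁ b₂
  inp1 : Fin c₁
  inp2 : Fin c₂
  dec1 : Fin n₁ → Fin M₀ → Fin M₁ → Matrix (Fin n → β₁) (Fin n → β₁) ℂ
  dec1_pos : ∀ b₁ m₀ m₁, (dec1 b₁ m₀ m₁).PosSemidef
  dec1_sum : ∀ b₁, (∑ m₀, ∑ m₁, dec1 b₁ m₀ m₁) = 1
  dec2 : Fin n₂ → Fin M₀ → Matrix (Fin n → β₂) (Fin n → β₂) ℂ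
  dec2_pos : ∀ b₂ m₀, (dec2 b₂ m₀).PosSemidef
  dec2_sum : ∀ b₂, (∑ m₀, dec2 b₂ m₀) = 1

/-- The probability of error of a code with non-signaling resources, given the messages:
average over the correlation outcomes of the joint success probability. -/
def NSCode.err {ι β₁ β₂ : Type*} [Fintype ι] [DecidableEq ι] [Fintype β₁] [DecidableEq β₁]
    [Fintype β₂] [DecidableEq β₂] {n M₀ M₁ n₁ n₂ c₁ c₂ : ℕ}
    (N : Matrix ι ι ℂ →ₗ[ℂ] Matrix (β₁ × β₂) (β₁ × β₂) ℂ)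
    (c : NSCode ι β₁ β₂ n M₀ M₁ n₁ n₂ c₁ c₂) (m₀ : Fin M₀) (m₁ : Fin M₁) : ℝ :=
  1 - ∑ b₁, ∑ b₂, c.p c.inp1 c.inp2 b₁ b₂ *
    (((c.dec1 b₁ m₀ m₁ ⊗ₖ c.dec2 b₂ m₀) * prodChannel N n (c.enc m₀ m₁)).trace).re

/-- Achievability of a classical rate pair with non-signaling correlated resources
shared between the decoders. -/
def nsAchievable {ι β₁ β₂ : Type*} [Fintype ι] [DecidableEq ι] [Fintype β₁] [DecidableEq β₁]
    [Fintype β₂] [DecidableEq β₂]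
    (N : Matrix ι ι ℂ →ₗ[ℂ] Matrix (β₁ × β₂) (β₁ × β₂) ℂ) (r : ℝ × ℝ) : Prop :=
  ∀ ε : ℝ, 0 < ε → ∃ n₀ : ℕ, ∀ n, n₀ ≤ n →
    ∃ (M₀ M₁ n₁ n₂ c₁ c₂ : ℕ) (c : NSCode ι β₁ β₂ n M₀ M₁ n₁ n₂ c₁ c₂),
      (2 : ℝ) ^ ((n : ℝ) * r.1) ≤ M₀ ∧ (2 : ℝ) ^ ((n : ℝ) * r.2) ≤ M₁ ∧
      ∀ m₀ m₁, NSCode.err N c m₀ m₁ ≤ ε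

/-- Achievability of a classical rate pair without such resources: the correlation is
trivial (all sets of outcomes and inputs are singletons). -/
def plainAchievable {ι β₁ β₂ : Type*} [Fintype ι] [DecidableEq ι] [Fintype β₁]
    [DecidableEq β₁] [Fintype β₂] [DecidableEq β₂]
    (N : Matrix ι ι ℂ →ₗ[ℂ] Matrix (β₁ × β₂) (β₁ × β₂) ℂ) (r : ℝ × ℝ) : Prop :=
  ∀ ε : ℝ, 0 < ε → ∃ n₀ : ℕ, ∀ n, n₀ ≤ n →
    ∃ (M₀ M₁ : ℕ) (c : NSCode ι β₁ β₂ n M₀ M₁ 1 1 1 1),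
      (2 : ℝ) ^ ((n : ℝ) * r.1) ≤ M₀ ∧ (2 : ℝ) ^ ((n : ℝ) * r.2) ≤ M₁ ∧
      ∀ m₀ m₁, NSCode.err N c m₀ m₁ ≤ ε

section PosSemidef

variable {n 𝕜 : Type*} [DecidableEq n] [RCLike 𝕜]

theorem _root_.Matrix.PosSemidef.trace_mul_nonneg [Fintype n] {A B : Matrix n n 𝕜}
    (hA : A.PosSemidef) (hB : B.PosSemidef) : 0 ≤ (A * B).trace := by
  open scoped MatrixOrder in
  obtain ⟨C, rfl⟩ := CStarAlgebra.nonneg_iff_eq_star_mul_self.mp hA.nonneg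
  rw [Matrix.mul_assoc, Matrix.trace_mul_comm, star_eq_conjTranspose]
  exact (hB.mul_mul_conjTranspose_same C).trace_nonneg

theorem _root_.Matrix.PosSemidef.one_sub_of_sum_eq_one {μ : Type*} [Fintype μ]
    [DecidableEq μ] {D : μ → Matrix n n 𝕜} (hD : ∀ m, (D m).PosSemidef) (hsum : ∑ m, D m = 1)
    (m : μ) : (1 - D m).PosSemidef := by
  rw [← hsum, ← Finset.sum_erase_eq_sub (Finset.mem_univ m)]
  exact posSemidef_sum _ fun m' _ => hD m'

theorem _root_.Matrix.PosSemidef.one_sub_sum_smul {κ : Type*} [Fintype κ] {w : κ → ℝ}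
    (hw : ∀ k, 0 ≤ w k) (hw1 : ∑ k, w k = 1)
    {X : κ → Matrix n n 𝕜} (hX : ∀ k, (1 - X k).PosSemidef) :
    (1 - ∑ k, w k • X k).PosSemidef := by
  have h : 1 - ∑ k, w k • X k = ∑ k, w k • (1 - X k) := by
    simp only [smul_sub, Finset.sum_sub_distrib, ← Finset.sum_smul, hw1, one_smul]
  rw [h]
  exact posSemidef_sum _ fun k _ => (hX k).smul (hw k)

end PosSemidef

theorem _root_.Matrix.PosSemidef.prod_apply {𝕜 α ι : Type*} [RCLike 𝕜] [Fintype α]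
    [DecidableEq α] [Fintype ι] [DecidableEq ι] {C : Matrix α α 𝕜} (hC : C.PosSemidef) :
    (Matrix.of fun x y : ι → α => ∏ t, C (x t) (y t)).PosSemidef := by
  open scoped MatrixOrder in
  obtain ⟨S, hS⟩ := CStarAlgebra.nonneg_iff_eq_star_mul_self.mp hC.nonneg
  suffices h : (Matrix.of fun x y : ι → α => ∏ t, C (x t) (y t)) =
      (Matrix.of fun k x : ι → α => ∏ t, S (k t) (x t))ᴴ *
        Matrix.of fun k x : ι → α => ∏ t, S (k t) (x t) by
    rw [h]; exact posSemidef_conjTranspose_mul_self _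
  ext x y
  simp only [hS, star_eq_conjTranspose, Matrix.of_apply, Matrix.mul_apply,
    Matrix.conjTranspose_apply, star_prod, ← Finset.prod_mul_distrib]
  exact Fintype.prod_sum _

section Channel

variable {a b : Type*} [Fintype a] [DecidableEq a]

theorem map_apply_eq_sum_choi (Φ : Matrix a a ℂ →ₗ[ℂ] Matrix b b ℂ) (ρ : Matrix a a ℂ)
    (i j : b) : Φ ρ i j = ∑ p, ∑ q, ρ p q * choi Φ (p, i) (q, j) := by
  conv_lhs => rw [Matrix.matrix_eq_sum_single ρ]
  simp only [map_sum, Matrix.sum_apply]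
  refine Finset.sum_congr rfl fun p _ => Finset.sum_congr rfl fun q _ => ?_
  rw [show Matrix.single p q (ρ p q) = ρ p q • Matrix.single p q 1 by simp, map_smul]
  rfl

variable [Fintype b]

theorem posSemidef_map_of_posSemidef_choi [DecidableEq b]
    {Φ : Matrix a a ℂ →ₗ[ℂ] Matrix b b ℂ} (hΦ : (choi Φ).PosSemidef) {ρ : Matrix a a ℂ}
    (hρ : ρ.PosSemidef) : (Φ ρ).PosSemidef := by
  set E : Matrix (a × b) b ℂ := Matrix.of fun x i => if x.2 = i then 1 else 0
  have hJ : (Matrix.of fun _ _ => 1 : Matrix b b ℂ).PosSemidef := by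
    simpa [Matrix.vecMulVec] using Matrix.posSemidef_vecMulVec_self_star (fun _ : b => (1 : ℂ))
  suffices h : Φ ρ = Eᴴ * ((ρ ⊗ₖ Matrix.of fun _ _ => 1) ⊙ choi Φ) * E by
    rw [h]; exact ((hρ.kronecker hJ).hadamard hΦ).conjTranspose_mul_mul_same E
  ext i j
  rw [map_apply_eq_sum_choi, Finset.sum_comm]
  simp [E, Matrix.mul_apply, Fintype.sum_prod_type]

theorem posSemidef_choi_tensorPow [DecidableEq b] {N : Matrix a a ℂ →ₗ[ℂ] Matrix b b ℂ}
    (hN : (choi N).PosSemidef) (n : ℕ) : (choi (tensorPow N n)).PosSemidef := by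
  have h : choi (tensorPow N n) =
      (Matrix.of fun x y : Fin n → a × b => ∏ t, choi N (x t) (y t)).submatrix
        (fun x t => (x.1 t, x.2 t)) (fun x t => (x.1 t, x.2 t)) := by
    ext x y
    simp [choi, tensorPow, Matrix.single_apply, ite_and]
  rw [h]
  exact hN.prod_apply.submatrix _

theorem trace_tensorPow {N : Matrix a a ℂ →ₗ[ℂ] Matrix b b ℂ}
    (hN : ∀ ρ, (N ρ).trace = ρ.trace) (n : ℕ) (ρ : Matrix (Fin n → a) (Fin n → a) ℂ) :
    (tensorPow N n ρ).trace = ρ.trace := by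
  have hsingle : ∀ p q : Fin n → a,
      ∑ i : Fin n → b, ∏ t, N (Matrix.single (p t) (q t) 1) (i t) (i t) =
        if p = q then 1 else 0 := by
    intro p q
    calc _ = ∏ t, (N (Matrix.single (p t) (q t) 1)).trace :=
          (Fintype.prod_sum fun t (x : b) => N (Matrix.single (p t) (q t) 1) x x).symm
      _ = ∏ t, if p t = q t then 1 else 0 := by
          refine Finset.prod_congr rfl fun t _ => ?_
          split_ifs with h
          · rw [hN, h, Matrix.trace_single_eq_same]
          · rw [hN, Matrix.trace_single_eq_of_ne _ _ _ h]
      _ = _ := by simp [Fintype.prod_boole, funext_iff]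
  calc (tensorPow N n ρ).trace
      = ∑ p, ∑ q, ρ p q *
          ∑ i : Fin n → b, ∏ t, N (Matrix.single (p t) (q t) 1) (i t) (i t) := by
        simp only [Matrix.trace, Matrix.diag, tensorPow, LinearMap.coe_mk, AddHom.coe_mk,
          Matrix.of_apply, Finset.mul_sum]
        rw [Finset.sum_comm]
        exact Finset.sum_congr rfl fun p _ => Finset.sum_comm
    _ = ρ.trace := by simp [hsingle, Matrix.trace]

end Channel

theorem _root_.Matrix.trace_submatrix_equiv {m n R : Type*} [Fintype m] [Fintype n]
    [AddCommMonoid R] (M : Matrix n n R) (e : m ≃ n) : (M.submatrix e e).trace = M.trace :=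
  e.sum_comp fun i => M i i

theorem IsCPTP.isDensity_prodChannel {ι β₁ β₂ : Type*} [Fintype ι] [DecidableEq ι]
    [Fintype β₁] [DecidableEq β₁] [Fintype β₂] [DecidableEq β₂]
    {N : Matrix ι ι ℂ →ₗ[ℂ] Matrix (β₁ × β₂) (β₁ × β₂) ℂ} (hN : IsCPTP N) (n : ℕ)
    {ρ : Matrix (Fin n → ι) (Fin n → ι) ℂ} (hρ : IsDensity ρ) :
    IsDensity (prodChannel N n ρ) := by
  set e := (Equiv.arrowProdEquivProdArrow (Fin n) (fun _ => β₁) (fun _ => β₂)).symm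
  have h : prodChannel N n ρ = (tensorPow N n ρ).submatrix e e := rfl
  rw [h, IsDensity, Matrix.trace_submatrix_equiv, trace_tensorPow hN.2, hρ.2]
  exact ⟨(posSemidef_map_of_posSemidef_choi (posSemidef_choi_tensorPow hN.1 n) hρ.1).submatrix e,
    rfl⟩

theorem _root_.Matrix.sum_kronecker {l m n p κ α : Type*} [Fintype κ]
    [NonUnitalNonAssocSemiring α]
    (A : κ → Matrix l m α) (B : Matrix n p α) : (∑ k, A k) ⊗ₖ B = ∑ k, A k ⊗ₖ B := by
  ext ⟨i, i'⟩ ⟨j, j'⟩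
  simp [Matrix.sum_apply, Finset.sum_mul]

theorem _root_.Matrix.kronecker_sum {l m n p κ α : Type*} [Fintype κ]
    [NonUnitalNonAssocSemiring α]
    (A : Matrix l m α) (B : κ → Matrix n p α) : A ⊗ₖ (∑ k, B k) = ∑ k, A ⊗ₖ B k := by
  ext ⟨i, i'⟩ ⟨j, j'⟩
  simp [Matrix.sum_apply, Finset.mul_sum]

theorem _root_.Matrix.sub_kronecker {l m n p α : Type*} [NonUnitalNonAssocRing α]
    (A₁ A₂ : Matrix l m α) (B : Matrix n p α) : (A₁ - A₂) ⊗ₖ B = A₁ ⊗ₖ B - A₂ ⊗ₖ B := by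
  ext ⟨i, i'⟩ ⟨j, j'⟩
  simp [sub_mul]

theorem _root_.Matrix.kronecker_sub {l m n p α : Type*} [NonUnitalNonAssocRing α]
    (A : Matrix l m α) (B₁ B₂ : Matrix n p α) : A ⊗ₖ (B₁ - B₂) = A ⊗ₖ B₁ - A ⊗ₖ B₂ := by
  ext ⟨i, i'⟩ ⟨j, j'⟩
  simp [mul_sub]

section Derandomization

variable {n γ δ κ₁ κ₂ : Type*} [Fintype n] [DecidableEq n] [Fintype γ] [DecidableEq γ]
  [Fintype δ] [DecidableEq δ] [Fintype κ₁] [Fintype κ₂]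

theorem re_trace_mul_le_of_posSemidef_sub {X Y σ : Matrix n n ℂ} (hXY : (Y - X).PosSemidef)
    (hσ : σ.PosSemidef) : (X * σ).trace.re ≤ (Y * σ).trace.re := by
  have h := hXY.trace_mul_nonneg hσ
  rw [Matrix.sub_mul, Matrix.trace_sub] at h
  simpa using (Complex.le_def.mp h).1

theorem re_trace_sum_smul_mul (w : κ₁ → ℝ) (X : κ₁ → Matrix n n ℂ) (σ : Matrix n n ℂ) :
    ((∑ k, w k • X k) * σ).trace.re = ∑ k, w k * (X k * σ).trace.re := by
  simp [Finset.sum_mul, Matrix.trace_sum, Matrix.trace_smul, Complex.re_sum]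

variable {σ : Matrix (γ × δ) (γ × δ) ℂ}

theorem one_sub_re_trace_kronecker_mul_le {A : Matrix γ γ ℂ} {B : Matrix δ δ ℂ}
    (hA : (1 - A).PosSemidef) (hB : (1 - B).PosSemidef) (hσ : IsDensity σ) :
    1 - ((A ⊗ₖ B) * σ).trace.re ≤
      (1 - ((A ⊗ₖ 1) * σ).trace.re) + (1 - (((1 : Matrix γ γ ℂ) ⊗ₖ B) * σ).trace.re) := by
  have h := (hA.kronecker hB).trace_mul_nonneg hσ.1
  have hexpand : (1 - A) ⊗ₖ (1 - B) = 1 - A ⊗ₖ 1 - 1 ⊗ₖ B + A ⊗ₖ B := by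
    rw [Matrix.sub_kronecker, Matrix.kronecker_sub, Matrix.kronecker_sub,
      Matrix.one_kronecker_one]
    abel
  rw [hexpand, Matrix.add_mul, Matrix.sub_mul, Matrix.sub_mul, Matrix.one_mul,
    Matrix.trace_add, Matrix.trace_sub, Matrix.trace_sub, hσ.2] at h
  have h' := (Complex.le_def.mp h).1
  simp only [Complex.zero_re, Complex.add_re, Complex.sub_re, Complex.one_re] at h'
  linarith

variable {p : κ₁ → κ₂ → ℝ} {A : κ₁ → Matrix γ γ ℂ} {B : κ₂ → Matrix δ δ ℂ}

theorem sum_sum_mul_re_trace_kronecker_le_left (hp : ∀ b₁ b₂, 0 ≤ p b₁ b₂)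
    (hA : ∀ b₁, (A b₁).PosSemidef) (hB : ∀ b₂, (1 - B b₂).PosSemidef) (hσ : σ.PosSemidef) :
    ∑ b₁, ∑ b₂, p b₁ b₂ * ((A b₁ ⊗ₖ B b₂) * σ).trace.re ≤
      (((∑ b₁, (∑ b₂, p b₁ b₂) • A b₁) ⊗ₖ 1) * σ).trace.re := by
  simp only [Matrix.sum_kronecker, Matrix.smul_kronecker]
  rw [re_trace_sum_smul_mul]
  simp only [Finset.sum_mul]
  refine Finset.sum_le_sum fun b₁ _ => Finset.sum_le_sum fun b₂ _ =>
    mul_le_mul_of_nonneg_left (re_trace_mul_le_of_posSemidef_sub ?_ hσ) (hp b₁ b₂)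
  rw [← Matrix.kronecker_sub]
  exact (hA b₁).kronecker (hB b₂)

theorem sum_sum_mul_re_trace_kronecker_le_right (hp : ∀ b₁ b₂, 0 ≤ p b₁ b₂)
    (hA : ∀ b₁, (1 - A b₁).PosSemidef) (hB : ∀ b₂, (B b₂).PosSemidef) (hσ : σ.PosSemidef) :
    ∑ b₁, ∑ b₂, p b₁ b₂ * ((A b₁ ⊗ₖ B b₂) * σ).trace.re ≤
      (((1 : Matrix γ γ ℂ) ⊗ₖ ∑ b₂, (∑ b₁, p b₁ b₂) • B b₂) * σ).trace.re := by
  simp only [Matrix.kronecker_sum, Matrix.kronecker_smul]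
  rw [re_trace_sum_smul_mul, Finset.sum_comm]
  simp only [Finset.sum_mul]
  refine Finset.sum_le_sum fun b₂ _ => Finset.sum_le_sum fun b₁ _ =>
    mul_le_mul_of_nonneg_left (re_trace_mul_le_of_posSemidef_sub ?_ hσ) (hp b₁ b₂)
  rw [← Matrix.sub_kronecker]
  exact (hA b₁).kronecker (hB b₂)

theorem one_sub_re_trace_marginal_kronecker_le (hσ : IsDensity σ)
    (hp : ∀ b₁ b₂, 0 ≤ p b₁ b₂) (hp1 : ∑ b₁, ∑ b₂, p b₁ b₂ = 1)
    (hA : ∀ b₁, (A b₁).PosSemidef) (hA1 : ∀ b₁, (1 - A b₁).PosSemidef)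
    (hB : ∀ b₂, (B b₂).PosSemidef) (hB1 : ∀ b₂, (1 - B b₂).PosSemidef) :
    1 - (((∑ b₁, (∑ b₂, p b₁ b₂) • A b₁) ⊗ₖ ∑ b₂, (∑ b₁, p b₁ b₂) • B b₂) * σ).trace.re ≤
      2 * (1 - ∑ b₁, ∑ b₂, p b₁ b₂ * ((A b₁ ⊗ₖ B b₂) * σ).trace.re) := by
  have hunion := one_sub_re_trace_kronecker_mul_le
    (Matrix.PosSemidef.one_sub_sum_smul (fun b₁ => Finset.sum_nonneg fun b₂ _ => hp b₁ b₂)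
      hp1 hA1)
    (Matrix.PosSemidef.one_sub_sum_smul (fun b₂ => Finset.sum_nonneg fun b₁ _ => hp b₁ b₂)
      (by rw [Finset.sum_comm]; exact hp1) hB1) hσ
  linarith [sum_sum_mul_re_trace_kronecker_le_left hp hA hB1 hσ.1,
    sum_sum_mul_re_trace_kronecker_le_right hp hA1 hB hσ.1]

end Derandomization

theorem sum_sum_smul_eq_of_sum_eq {κ μ M : Type*} [Fintype κ] [Fintype μ] [AddCommMonoid M]
    [Module ℝ M] {w : κ → ℝ} (hw1 : ∑ k, w k = 1) {D : κ → μ → M} {e : M}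
    (hD : ∀ k, ∑ m, D k m = e) : ∑ m, ∑ k, w k • D k m = e := by
  rw [Finset.sum_comm]
  simp only [← Finset.smul_sum, hD, ← Finset.sum_smul, hw1, one_smul]

namespace NSCode

variable {ι β₁ β₂ : Type*} [Fintype ι] [DecidableEq ι] [Fintype β₁] [DecidableEq β₁]
  [Fintype β₂] [DecidableEq β₂] {n M₀ M₁ n₁ n₂ c₁ c₂ : ℕ}
  (c : NSCode ι β₁ β₂ n M₀ M₁ n₁ n₂ c₁ c₂)

def marginal₁ (b₁ : Fin n₁) : ℝ := ∑ b₂, c.p c.inp1 c.inp2 b₁ b₂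

def marginal₂ (b₂ : Fin n₂) : ℝ := ∑ b₁, c.p c.inp1 c.inp2 b₁ b₂

theorem marginal₁_nonneg (b₁ : Fin n₁) : 0 ≤ c.marginal₁ b₁ :=
  Finset.sum_nonneg fun _ _ => c.p_nonneg _ _ _ _

theorem marginal₂_nonneg (b₂ : Fin n₂) : 0 ≤ c.marginal₂ b₂ :=
  Finset.sum_nonneg fun _ _ => c.p_nonneg _ _ _ _

theorem sum_marginal₁ : ∑ b₁, c.marginal₁ b₁ = 1 := c.p_sum _ _

theorem sum_marginal₂ : ∑ b₂, c.marginal₂ b₂ = 1 := by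
  unfold marginal₂
  rw [Finset.sum_comm]
  exact c.p_sum _ _

def averageDecoders : NSCode ι β₁ β₂ n M₀ M₁ 1 1 1 1 where
  enc := c.enc
  enc_density := c.enc_density
  p _ _ _ _ := 1
  p_nonneg _ _ _ _ := zero_le_one
  p_sum _ _ := by simp
  p_ns1 _ _ _ _ := rfl
  p_ns2 _ _ _ _ := rfl
  inp1 := 0
  inp2 := 0
  dec1 _ m₀ m₁ := ∑ b₁, c.marginal₁ b₁ • c.dec1 b₁ m₀ m₁
  dec1_pos _ m₀ m₁ :=
    posSemidef_sum _ fun b₁ _ => (c.dec1_pos b₁ m₀ m₁).smul (c.marginal₁_nonneg b₁)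
  dec1_sum _ := by
    rw [← Fintype.sum_prod_type']
    exact sum_sum_smul_eq_of_sum_eq c.sum_marginal₁ fun b₁ => by
      rw [Fintype.sum_prod_type', c.dec1_sum b₁]
  dec2 _ m₀ := ∑ b₂, c.marginal₂ b₂ • c.dec2 b₂ m₀
  dec2_pos _ m₀ :=
    posSemidef_sum _ fun b₂ _ => (c.dec2_pos b₂ m₀).smul (c.marginal₂_nonneg b₂)
  dec2_sum _ := sum_sum_smul_eq_of_sum_eq c.sum_marginal₂ c.dec2_sum

theorem err_averageDecoders_le {N : Matrix ι ι ℂ →ₗ[ℂ] Matrix (β₁ × β₂) (β₁ × β₂) ℂ}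
    (hN : IsCPTP N) (m₀ : Fin M₀) (m₁ : Fin M₁) :
    err N c.averageDecoders m₀ m₁ ≤ 2 * err N c m₀ m₁ := by
  have hdec1 : ∀ b₁, (1 - c.dec1 b₁ m₀ m₁).PosSemidef := fun b₁ =>
    Matrix.PosSemidef.one_sub_of_sum_eq_one
      (D := fun m : Fin M₀ × Fin M₁ => c.dec1 b₁ m.1 m.2) (fun _ => c.dec1_pos _ _ _)
      (by rw [Fintype.sum_prod_type', c.dec1_sum]) (m₀, m₁)
  have hdec2 : ∀ b₂, (1 - c.dec2 b₂ m₀).PosSemidef := fun b₂ =>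
    Matrix.PosSemidef.one_sub_of_sum_eq_one (c.dec2_pos b₂) (c.dec2_sum b₂) m₀
  simpa [err, averageDecoders, marginal₁, marginal₂] using
    one_sub_re_trace_marginal_kronecker_le (hN.isDensity_prodChannel n (c.enc_density m₀ m₁))
      (c.p_nonneg _ _) (c.p_sum _ _) (c.dec1_pos · m₀ m₁) hdec1 (c.dec2_pos · m₀) hdec2

end NSCode

section Achievability

variable {ι β₁ β₂ : Type*} [Fintype ι] [DecidableEq ι] [Fintype β₁] [DecidableEq β₁]
  [Fintype β₂] [DecidableEq β₂] {N : Matrix ι ι ℂ →ₗ[ℂ] Matrix (β₁ × β₂) (β₁ × β₂) ℂ}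
  {r : ℝ × ℝ}

theorem plainAchievable.nsAchievable (h : plainAchievable N r) : nsAchievable N r := by
  intro ε hε
  obtain ⟨n₀, hn₀⟩ := h ε hε
  refine ⟨n₀, fun n hn => ?_⟩
  obtain ⟨M₀, M₁, c, hM₀, hM₁, herr⟩ := hn₀ n hn
  exact ⟨M₀, M₁, 1, 1, 1, 1, c, hM₀, hM₁, herr⟩

theorem nsAchievable.plainAchievable (hN : IsCPTP N) (h : nsAchievable N r) :
    plainAchievable N r := by
  intro ε hε
  obtain ⟨n₀, hn₀⟩ := h (ε / 2) (half_pos hε)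
  refine ⟨n₀, fun n hn => ?_⟩
  obtain ⟨M₀, M₁, _, _, _, _, c, hM₀, hM₁, herr⟩ := hn₀ n hn
  refine ⟨M₀, M₁, c.averageDecoders, hM₀, hM₁, fun m₀ m₁ => ?_⟩
  linarith [c.err_averageDecoders_le hN m₀ m₁, herr m₀ m₁]

end Achievability

/-- Non-signaling correlated resources shared between the two decoders
do not increase the classical capacity region of a quantum broadcast channel with
degraded message sets. -/
theorem nonsignaling_decoders_no_gain {d d₁ d₂ : ℕ}
    (N : Matrix (Fin d) (Fin d) ℂ →ₗ[ℂ] Matrix (Fin d₁ × Fin d₂) (Fin d₁ × Fin d₂) ℂ)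
    (hN : IsCPTP N) :
    {r : ℝ × ℝ | nsAchievable N r} = {r : ℝ × ℝ | plainAchievable N r} :=
  Set.ext fun _ => ⟨nsAchievable.plainAchievable hN, plainAchievable.nsAchievable⟩

end QBC
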